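/- arXiv:2002.05863 — 4 statements merged into one kernel-verified Lean document; each statement's English description precedes it below -/
import Mathlib

section
/- Let p = 2 and let q0 = 2^e > 1 be a power of 2. Let K0 be a finite field with q0^3 elements. For u ∈ K0, let N(u) denote the number of T ∈ K0 satisfying T^(q0^2) − T^(q0) = u·T. Then N(1) = q0^2; moreover N(u) = q0 for exactly q0^2 values of u ∈ K0 \ {1}, and N(u) = 1 for all of the remaining q0^3 − q0^2 − 1 values of u ∈ K0 \ {1}. -/
open Polynomial Finset

lemma aux_card_roots {K : Type*} [Field K] [Fintype K] [DecidableEq K]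
    (p : Polynomial K) (hp : p ≠ 0) :
    (Finset.univ.filter fun x => p.eval x = 0).card ≤ p.natDegree := by
  calc (Finset.univ.filter fun x => p.eval x = 0).card
      ≤ p.roots.toFinset.card := by
        apply Finset.card_le_card
        intro x hx
        simp only [Finset.mem_filter] at hx
        simp [Multiset.mem_toFinset, Polynomial.mem_roots, hp, IsRoot.def, hx.2]
    _ ≤ Multiset.card p.roots := p.roots.toFinset_card_le
    _ ≤ p.natDegree := p.card_roots'

lemma aux_natcard_subtype {K : Type*} [Fintype K] [DecidableEq K] (p : K → Prop) [DecidablePred p] :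
    Nat.card {x : K // p x} = (Finset.univ.filter p).card := by
  rw [Nat.card_eq_fintype_card, Fintype.card_subtype]

lemma aux_char (e q0 : ℕ) (hq0 : q0 = 2 ^ e)
    (K0 : Type*) [Field K0] [Fintype K0] (hK0 : Fintype.card K0 = q0 ^ 3) : CharP K0 2 := by
  obtain ⟨p, hp⟩ := CharP.exists K0
  haveI := hp
  obtain ⟨n, hpp, hcard⟩ := FiniteField.card K0 p
  have h2 : p = 2 := by
    have hdvd : p ∣ 2 ^ (e * 3) := by
      rw [pow_mul, ← hq0, ← hK0, hcard]
      exact dvd_pow_self p (by positivity)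
    have := hpp.dvd_of_dvd_pow hdvd
    exact (Nat.prime_dvd_prime_iff_eq hpp Nat.prime_two).mp this
  rwa [h2] at hp

/-- Lemma 2.2(i) of Katz–Tiep, "Rigid local systems and finite general linear groups":
for `q0 = 2^e > 1` and `K0` the field with `q0^3` elements, letting `N u` be the number of
solutions `T ∈ K0` of `T^(q0^2) - T^(q0) = u * T`, we have `N 1 = q0^2`; moreover
`N u = q0` for exactly `q0^2` values of `u ≠ 1`, and `N u = 1` for the remaining
`q0^3 - q0^2 - 1` values of `u ≠ 1`. -/
theorem stmt_0 (e q0 : ℕ) (he : 1 ≤ e) (hq0 : q0 = 2 ^ e)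
    (K0 : Type*) [Field K0] [Fintype K0] (hK0 : Fintype.card K0 = q0 ^ 3)
    (N : K0 → ℕ)
    (hN : ∀ u : K0, N u = Nat.card {T : K0 // T ^ (q0 ^ 2) - T ^ q0 = u * T}) :
    N 1 = q0 ^ 2 ∧
    Nat.card {u : K0 // u ≠ 1 ∧ N u = q0} = q0 ^ 2 ∧
    Nat.card {u : K0 // u ≠ 1 ∧ N u = 1} = q0 ^ 3 - q0 ^ 2 - 1 := by
  classical
  haveI hch : CharP K0 2 := aux_char e q0 hq0 K0 hK0
  haveI : Fact (Nat.Prime 2) := ⟨Nat.prime_two⟩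
  have hq2 : 2 ≤ q0 := by
    rw [hq0]
    calc 2 = 2 ^ 1 := (pow_one 2).symm
    _ ≤ 2 ^ e := Nat.pow_le_pow_right (by norm_num) he
  have hq0ne : q0 ≠ 0 := by omega
  have hq_le : q0 ≤ q0 ^ 2 := by
    calc q0 = q0 ^ 1 := (pow_one q0).symm
      _ ≤ q0 ^ 2 := Nat.pow_le_pow_right (by omega) (by omega)
  have hone_le : 1 ≤ q0 ^ 2 := Nat.one_le_iff_ne_zero.mpr (by positivity)
  have h20 : (2 : K0) = 0 := CharTwo.two_eq_zero
  have hfrob1 : ∀ x y : K0, (x + y) ^ q0 = x ^ q0 + y ^ q0 := by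
    intro x y; rw [hq0]; exact add_pow_char_pow x y 2 e
  have hfrob2 : ∀ x y : K0, (x + y) ^ (q0 ^ 2) = x ^ (q0 ^ 2) + y ^ (q0 ^ 2) := by
    intro x y; rw [hq0, ← pow_mul]; exact add_pow_char_pow x y 2 (e*2)
  have hpc : ∀ x : K0, x ^ (q0 ^ 3) = x := fun x => by
    rw [← hK0]; exact FiniteField.pow_card x
  -- the additive map g
  set g : K0 →+ K0 := AddMonoidHom.mk' (fun x => x ^ (q0 ^ 2) + x ^ q0 + x)
    (by intro a b; show (a + b) ^ (q0 ^ 2) + (a + b) ^ q0 + (a + b) = _; rw [hfrob1, hfrob2]; ring) with hg_def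
  have hg_apply : ∀ x : K0, g x = x ^ (q0 ^ 2) + x ^ q0 + x := fun x => rfl
  -- range g is contained in the fixed points of Frobenius
  have hrange_fix : ∀ x ∈ g.range, x ^ q0 = x := by
    rintro _ ⟨y, rfl⟩
    rw [hg_apply, hfrob1, hfrob1, ← pow_mul, ← pow_mul]
    rw [show q0 ^ 2 * q0 = q0 ^ 3 by ring, show q0 * q0 = q0 ^ 2 by ring, hpc]
    ring
  have hrangecard : Nat.card g.range = (Finset.univ.filter fun x : K0 => x ∈ g.range).card := by
    have e1 : Nat.card g.range = Nat.card {x : K0 // x ∈ g.range} := rfl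
    rw [e1, aux_natcard_subtype]
  -- cardinality bounds via polynomials
  have hker_le : Nat.card g.ker ≤ q0 ^ 2 := by
    have h1 : Nat.card g.ker = (Finset.univ.filter fun x : K0 => g x = 0).card := by
      have e1 : Nat.card g.ker = Nat.card {x : K0 // x ∈ g.ker} := rfl
      rw [e1, aux_natcard_subtype]
      congr 1
      ext x
      simp only [Finset.mem_filter, Finset.mem_univ, true_and, AddMonoidHom.mem_ker]
    rw [h1]
    set p₂ : Polynomial K0 := X ^ (q0 ^ 2) + X ^ q0 + X with hp₂
    have hpne : p₂ ≠ 0 := by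
      intro h
      have := congrArg (Polynomial.eval 1) h
      simp only [hp₂, eval_add, eval_pow, eval_X, eval_zero, one_pow] at this
      have h3 : (1 : K0) + 1 + 1 = 1 := by linear_combination h20
      rw [h3] at this
      exact one_ne_zero this
    have hdeg : p₂.natDegree ≤ q0 ^ 2 := by
      refine le_trans (natDegree_add_le _ _) ?_
      simp only [max_le_iff]
      constructor
      · refine le_trans (natDegree_add_le _ _) ?_
        simp only [max_le_iff, natDegree_X_pow]
        exact ⟨le_refl _, hq_le⟩
      · rw [natDegree_X]; omega
    have hsub : (Finset.univ.filter fun x : K0 => g x = 0)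
        ⊆ (Finset.univ.filter fun x : K0 => p₂.eval x = 0) := by
      intro x hx
      simp only [Finset.mem_filter, Finset.mem_univ, true_and] at hx ⊢
      rw [hp₂]; simp only [eval_add, eval_pow, eval_X]
      rw [← hg_apply]; exact hx
    exact le_trans (Finset.card_le_card hsub) (le_trans (aux_card_roots p₂ hpne) hdeg)
  have hfix_le : (Finset.univ.filter fun x : K0 => x ^ q0 = x).card ≤ q0 := by
    set p₁ : Polynomial K0 := X ^ q0 - X with hp₁
    have hcoeff : p₁.coeff q0 = 1 := by
      rw [hp₁, coeff_sub, coeff_X_pow, if_pos rfl, Polynomial.coeff_X,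
        if_neg (by omega : ¬(1 = q0)), sub_zero]
    have hpne : p₁ ≠ 0 := by
      intro h
      rw [h, coeff_zero] at hcoeff
      exact one_ne_zero hcoeff.symm
    have hdeg : p₁.natDegree ≤ q0 := by
      refine le_trans (natDegree_sub_le _ _) ?_
      simp only [max_le_iff, natDegree_X_pow, natDegree_X]
      exact ⟨le_refl _, by omega⟩
    have heq : (Finset.univ.filter fun x : K0 => x ^ q0 = x)
        = (Finset.univ.filter fun x : K0 => p₁.eval x = 0) := by
      apply Finset.filter_congr
      intro x _
      rw [hp₁]; simp only [eval_sub, eval_pow, eval_X, sub_eq_zero]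
    rw [heq]
    exact le_trans (aux_card_roots p₁ hpne) hdeg
  have hsubfix : (Finset.univ.filter fun x : K0 => x ∈ g.range)
      ⊆ (Finset.univ.filter fun x : K0 => x ^ q0 = x) := by
    intro x hx
    simp only [Finset.mem_filter, Finset.mem_univ, true_and] at hx ⊢
    exact hrange_fix x hx
  have hrange_le : Nat.card g.range ≤ q0 := by
    rw [hrangecard]
    exact le_trans (Finset.card_le_card hsubfix) hfix_le
  have hprod : q0 ^ 3 = Nat.card g.range * Nat.card g.ker := by
    have h1 : Nat.card K0 = Nat.card (K0 ⧸ g.ker) * Nat.card g.ker :=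
      AddSubgroup.card_eq_card_quotient_mul_card_addSubgroup g.ker
    have h2 : Nat.card (K0 ⧸ g.ker) = Nat.card g.range :=
      Nat.card_congr (QuotientAddGroup.quotientKerEquivRange g).toEquiv
    rw [← h2, ← h1, Nat.card_eq_fintype_card, hK0]
  have hq2pos : 0 < q0 ^ 2 := by positivity
  have hkg : Nat.card g.ker = q0 ^ 2 := by
    refine le_antisymm hker_le ?_
    have h1 : q0 * q0 ^ 2 ≤ q0 * Nat.card g.ker := by
      calc q0 * q0 ^ 2 = q0 ^ 3 := by ring
        _ = Nat.card g.range * Nat.card g.ker := hprod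
        _ ≤ q0 * Nat.card g.ker := Nat.mul_le_mul_right _ hrange_le
    exact Nat.le_of_mul_le_mul_left h1 (by omega)
  have hrg : Nat.card g.range = q0 := by
    refine le_antisymm hrange_le ?_
    have h1 : q0 * q0 ^ 2 ≤ Nat.card g.range * q0 ^ 2 := by
      calc q0 * q0 ^ 2 = q0 ^ 3 := by ring
        _ = Nat.card g.range * Nat.card g.ker := hprod
        _ ≤ Nat.card g.range * q0 ^ 2 := Nat.mul_le_mul_left _ hker_le
    exact Nat.le_of_mul_le_mul_right h1 hq2pos
  -- #fixed points = q0
  have hfq : (Finset.univ.filter fun x : K0 => x ^ q0 = x).card = q0 := by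
    refine le_antisymm hfix_le ?_
    calc q0 = Nat.card g.range := hrg.symm
      _ = (Finset.univ.filter fun x : K0 => x ∈ g.range).card := hrangecard
      _ ≤ (Finset.univ.filter fun x : K0 => x ^ q0 = x).card := Finset.card_le_card hsubfix
  have hfqcard : Nat.card {x : K0 // x ^ q0 = x} = q0 := by
    rw [aux_natcard_subtype, hfq]
  -- N 1 = q0^2
  have hN1 : N 1 = q0 ^ 2 := by
    have hc1 : Nat.card {T : K0 // T ^ (q0 ^ 2) - T ^ q0 = 1 * T} = Nat.card g.ker := by
      apply Nat.card_congr
      apply Equiv.subtypeEquivRight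
      intro T
      rw [AddMonoidHom.mem_ker, hg_apply]
      constructor
      · intro h; linear_combination h + (T ^ q0 + T) * h20
      · intro h; linear_combination h - (T ^ q0 + T) * h20
    rw [hN 1, hc1, hkg]
  -- dichotomy for u ≠ 1
  have hBor : ∀ u : K0, u ≠ 1 → N u = 1 ∨ N u = q0 := by
    intro u hu
    have hv : u + 1 ≠ 0 := fun h => hu (by linear_combination h - h20)
    have hvq : (u + 1) ^ q0 ≠ 0 := pow_ne_zero _ hv
    set c : K0 := (u + 1) / (u + 1) ^ q0 with hc_def
    have hc : c ≠ 0 := div_ne_zero hv hvq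
    have hfor : ∀ T : K0, T ^ (q0 ^ 2) - T ^ q0 = u * T → T ^ q0 = c * T := by
      intro T hE
      have hE' : T ^ (q0 ^ 2) = u * T + T ^ q0 := by linear_combination hE
      have h1 : T = u ^ q0 * T ^ q0 + (u * T + T ^ q0) := by
        calc T = T ^ (q0 ^ 3) := (hpc T).symm
          _ = (T ^ (q0 ^ 2)) ^ q0 := by rw [← pow_mul, show q0 ^ 2 * q0 = q0 ^ 3 from by ring]
          _ = (u * T + T ^ q0) ^ q0 := by rw [hE']
          _ = (u * T) ^ q0 + (T ^ q0) ^ q0 := hfrob1 _ _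
          _ = u ^ q0 * T ^ q0 + T ^ (q0 ^ 2) := by
              rw [mul_pow, ← pow_mul, show q0 * q0 = q0 ^ 2 from by ring]
          _ = u ^ q0 * T ^ q0 + (u * T + T ^ q0) := by rw [hE']
      have h2' : (u + 1) ^ q0 * T ^ q0 = (u + 1) * T := by
        rw [hfrob1 u 1, one_pow]
        linear_combination (-(u * T)) * h20 - h1
      rw [hc_def, div_mul_eq_mul_div, eq_div_iff hvq]
      linear_combination h2'
    by_cases hex : ∃ s : K0, s ≠ 0 ∧ s ^ (q0 ^ 2) - s ^ q0 = u * s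
    · right
      obtain ⟨s, hs0, hsE⟩ := hex
      have hsq : s ^ q0 = c * s := hfor s hsE
      have hpow2 : ∀ T : K0, T ^ q0 = c * T → T ^ (q0 ^ 2) = c ^ q0 * (c * T) := by
        intro T hT
        calc T ^ (q0 ^ 2) = (T ^ q0) ^ q0 := by rw [← pow_mul, show q0 * q0 = q0 ^ 2 from by ring]
          _ = (c * T) ^ q0 := by rw [hT]
          _ = c ^ q0 * T ^ q0 := mul_pow _ _ _
          _ = c ^ q0 * (c * T) := by rw [hT]
      have hd : c ^ q0 * c + c + u = 0 := by
        have h1 := hpow2 s hsq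
        have h2 : (c ^ q0 * c + c + u) * s = 0 := by
          linear_combination h1 - hsE - hsq + (c ^ q0 * c * s) * h20
        exact (mul_eq_zero.mp h2).resolve_right hs0
      have hiff : ∀ T : K0, (T ^ (q0 ^ 2) - T ^ q0 = u * T) ↔ T ^ q0 = c * T := by
        intro T
        constructor
        · exact hfor T
        · intro hT
          have h1 := hpow2 T hT
          linear_combination h1 - hT + T * hd - (u * T + c * T) * h20
      have hcongr : Nat.card {T : K0 // T ^ (q0 ^ 2) - T ^ q0 = u * T}
          = Nat.card {x : K0 // x ^ q0 = x} := by
        apply Nat.card_congr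
        refine (Equiv.subtypeEquivRight hiff).trans ?_
        refine ⟨fun T => ⟨s⁻¹ * T.1, ?_⟩, fun t => ⟨s * t.1, ?_⟩, ?_, ?_⟩
        · obtain ⟨T, hT⟩ := T
          simp only [mul_pow, inv_pow, hsq, hT]
          field_simp
        · obtain ⟨t, ht⟩ := t
          simp only [mul_pow, hsq, ht]
          ring
        · rintro ⟨T, hT⟩
          ext
          simp [mul_inv_cancel_left₀ hs0]
        · rintro ⟨t, ht⟩
          ext
          simp [inv_mul_cancel_left₀ hs0]
      rw [hN u, hcongr, hfqcard]
    · left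
      rw [hN u]
      have hiff : ∀ T : K0, (T ^ (q0 ^ 2) - T ^ q0 = u * T) ↔ T = 0 := by
        intro T
        constructor
        · intro h
          by_contra h0
          exact hex ⟨T, h0, h⟩
        · rintro rfl
          rw [zero_pow (by positivity), zero_pow hq0ne, mul_zero, sub_zero]
      rw [Nat.card_congr (Equiv.subtypeEquivRight hiff)]
      haveI : Unique {T : K0 // T = 0} := ⟨⟨⟨0, rfl⟩⟩, by rintro ⟨x, rfl⟩; rfl⟩
      exact Nat.card_unique
  -- N as finset card
  have hNfilter : ∀ u : K0, N u = (Finset.univ.filter fun T : K0 => T ^ (q0 ^ 2) - T ^ q0 = u * T).card := by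
    intro u
    rw [hN u, aux_natcard_subtype]
  -- the sum
  have hsum : ∑ u : K0, N u = q0 ^ 3 + (q0 ^ 3 - 1) := by
    have h1 : ∑ u : K0, N u
        = ∑ T : K0, (Finset.univ.filter fun u : K0 => T ^ (q0 ^ 2) - T ^ q0 = u * T).card := by
      simp_rw [hNfilter, Finset.card_filter]
      exact Finset.sum_comm
    rw [h1]
    have h0 : (Finset.univ.filter fun u : K0 => (0:K0) ^ (q0 ^ 2) - (0:K0) ^ q0 = u * 0).card
        = q0 ^ 3 := by
      rw [Finset.filter_true_of_mem, Finset.card_univ, hK0]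
      intro u _
      rw [zero_pow (by positivity : q0 ^ 2 ≠ 0), zero_pow hq0ne, mul_zero, sub_zero]
    have hT : ∀ T : K0, T ≠ 0 →
        (Finset.univ.filter fun u : K0 => T ^ (q0 ^ 2) - T ^ q0 = u * T).card = 1 := by
      intro T hT0
      rw [Finset.card_eq_one]
      refine ⟨(T ^ (q0 ^ 2) - T ^ q0) / T, ?_⟩
      ext u
      simp only [Finset.mem_filter, Finset.mem_univ, true_and, Finset.mem_singleton]
      rw [eq_div_iff hT0]
      constructor
      · intro h; rw [← h]
      · intro h; rw [h]
    rw [← Finset.sum_erase_add _ _ (Finset.mem_univ (0 : K0)), h0]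
    have h2 : ∑ T ∈ Finset.univ.erase (0 : K0),
        (Finset.univ.filter fun u : K0 => T ^ (q0 ^ 2) - T ^ q0 = u * T).card = q0 ^ 3 - 1 := by
      rw [Finset.sum_congr rfl (fun T hTmem => hT T (Finset.ne_of_mem_erase hTmem))]
      rw [Finset.sum_const, smul_eq_mul, mul_one, Finset.card_erase_of_mem (Finset.mem_univ _),
        Finset.card_univ, hK0]
    rw [h2]
    omega
  -- the two filters
  set Sb : Finset K0 := Finset.univ.filter fun u => u ≠ 1 ∧ N u = q0 with hSb
  set Sc : Finset K0 := Finset.univ.filter fun u => u ≠ 1 ∧ N u = 1 with hSc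
  have hdisj : Disjoint Sb Sc := by
    rw [Finset.disjoint_filter]
    rintro u _ ⟨_, hq⟩ ⟨_, h1⟩
    omega
  have hunion : Sb ∪ Sc = Finset.univ.erase 1 := by
    ext u
    simp only [hSb, hSc, Finset.mem_union, Finset.mem_filter, Finset.mem_univ, true_and,
      Finset.mem_erase, and_true]
    constructor
    · rintro (⟨h, _⟩ | ⟨h, _⟩) <;> exact h
    · intro h
      rcases hBor u h with h1 | h1
      · exact Or.inr ⟨h, h1⟩
      · exact Or.inl ⟨h, h1⟩
  have hcard_union : Sb.card + Sc.card = q0 ^ 3 - 1 := by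
    rw [← Finset.card_union_of_disjoint hdisj, hunion,
      Finset.card_erase_of_mem (Finset.mem_univ _), Finset.card_univ, hK0]
  have hsum2 : ∑ u : K0, N u = q0 ^ 2 + (Sb.card * q0 + Sc.card) := by
    rw [← Finset.add_sum_erase _ _ (Finset.mem_univ (1 : K0)), hN1]
    congr 1
    rw [← hunion, Finset.sum_union hdisj]
    congr 1
    · rw [Finset.sum_congr rfl (fun u hu => ((Finset.mem_filter.mp hu).2).2),
        Finset.sum_const, smul_eq_mul]
    · rw [Finset.sum_congr rfl (fun u hu => ((Finset.mem_filter.mp hu).2).2),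
        Finset.sum_const, smul_eq_mul, mul_one]
  -- arithmetic
  have hge : q0 ^ 2 + 1 ≤ q0 ^ 3 := by
    have h1 : q0 ^ 2 * 2 ≤ q0 ^ 2 * q0 := Nat.mul_le_mul_left _ hq2
    have h2 : q0 ^ 2 * q0 = q0 ^ 3 := by ring
    omega
  have hbq : Sb.card = q0 ^ 2 := by
    have h1 : q0 ^ 3 + (q0 ^ 3 - 1) = q0 ^ 2 + (Sb.card * q0 + Sc.card) := by
      rw [← hsum, hsum2]
    have h2 : Sb.card * q0 = Sb.card * (q0 - 1) + Sb.card := by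
      have hh : Sb.card * q0 = Sb.card * ((q0 - 1) + 1) := by
        rw [Nat.sub_add_cancel (by omega)]
      rw [hh, Nat.mul_add, Nat.mul_one]
    have h3 : q0 ^ 3 = q0 ^ 2 * (q0 - 1) + q0 ^ 2 := by
      have hh : q0 ^ 2 * q0 = q0 ^ 2 * ((q0 - 1) + 1) := by
        rw [Nat.sub_add_cancel (by omega)]
      calc q0 ^ 3 = q0 ^ 2 * q0 := by ring
        _ = q0 ^ 2 * (q0 - 1) + q0 ^ 2 := by rw [hh, Nat.mul_add, Nat.mul_one]
    have h4 : Sb.card * (q0 - 1) = q0 ^ 2 * (q0 - 1) := by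
      generalize hA : Sb.card * (q0 - 1) = A at h2
      generalize hB : q0 ^ 2 * (q0 - 1) = B at h3
      omega
    exact Nat.eq_of_mul_eq_mul_right (by omega) h4
  have hcq : Sc.card = q0 ^ 3 - q0 ^ 2 - 1 := by omega
  refine ⟨hN1, ?_, ?_⟩
  · rw [aux_natcard_subtype, ← hSb, hbq]
  · rw [aux_natcard_subtype, ← hSc, hcq]
end

section
/- Let p be an odd prime and let q0 > 1 be a power of p. Let K0 be a finite field with q0^3 elements. For u ∈ K0, let N(u) denote the number of T ∈ K0 satisfying T^(q0^2) − T^(q0) = u·T. Then N(u) = q0 for exactly q0^2 + q0 + 1 values of u ∈ K0, and N(u) = 1 for all of the remaining q0^3 − q0^2 − q0 − 1 values of u ∈ K0. -/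
open Polynomial in
/-- Number of roots of a nonzero polynomial over a finite field is at most its degree. -/
lemma KT_card_root_le {K : Type*} [Field K] [Fintype K] (P : K[X]) (hP : P ≠ 0) :
    Nat.card {x : K // P.IsRoot x} ≤ P.natDegree := by
  classical
  rw [Nat.card_eq_fintype_card, Fintype.card_subtype]
  refine le_trans (Finset.card_le_card ?_) (le_trans (Multiset.toFinset_card_le _)
    (P.card_roots'))
  intro x hx
  simp only [Finset.mem_filter] at hx
  rw [Multiset.mem_toFinset, Polynomial.mem_roots hP]
  exact hx.2

open Polynomial in
/-- The fixed points of `x ↦ x^q` in a field of cardinality `q^3` number exactly `q`. -/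
lemma KT_card_fixed {K : Type*} [Field K] [Fintype K] (p e : ℕ) (hp : Fact p.Prime)
    [CharP K p] (he : 1 ≤ e) (hK : Fintype.card K = (p ^ e) ^ 3) :
    Nat.card {x : K // x ^ p ^ e = x} = p ^ e := by
  classical
  set q : ℕ := p ^ e with hq
  have hq1 : 1 < q := Nat.one_lt_pow (by omega) hp.out.one_lt
  -- the additive homomorphism ψ x = x^q - x
  let ψ : K →+ K :=
    { toFun := fun x => x ^ q - x
      map_zero' := by simp [zero_pow (by omega : q ≠ 0)]
      map_add' := by
        intro a b
        have := add_pow_char_pow (R := K) (p := p) (n := e) (x := a) (y := b)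
        rw [← hq] at this
        simp only [this]; ring }
  -- the additive homomorphism τ x = x^(q^2) + x^q + x
  let τ : K →+ K :=
    { toFun := fun x => x ^ q ^ 2 + x ^ q + x
      map_zero' := by
        simp [zero_pow (by positivity : q ^ 2 ≠ 0), zero_pow (by omega : q ≠ 0)]
      map_add' := by
        intro a b
        have h1 := add_pow_char_pow (R := K) (p := p) (n := e) (x := a) (y := b)
        have h2 := add_pow_char_pow (R := K) (p := p) (n := 2 * e) (x := a) (y := b)
        rw [← hq] at h1
        have hqq : p ^ (2 * e) = q ^ 2 := by rw [hq, ← pow_mul, mul_comm]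
        rw [hqq] at h2
        simp only [h1, h2]; ring }
  -- range ψ ⊆ ker τ
  have hsub : ψ.range ≤ τ.ker := by
    rintro y ⟨x, rfl⟩
    have hs2 : ∀ a b : K, (a - b) ^ q ^ 2 = a ^ q ^ 2 - b ^ q ^ 2 := by
      intro a b
      have := sub_pow_char_pow (R := K) (p := p) (n := 2 * e) (x := a) (y := b)
      have hqq : p ^ (2 * e) = q ^ 2 := by rw [hq, ← pow_mul, mul_comm]
      rwa [hqq] at this
    have hs1 : ∀ a b : K, (a - b) ^ q = a ^ q - b ^ q := by
      intro a b
      have := sub_pow_char_pow (R := K) (p := p) (n := e) (x := a) (y := b)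
      rwa [← hq] at this
    have hcube : ∀ a : K, a ^ q ^ 3 = a := by
      intro a
      rw [← hK]; exact FiniteField.pow_card a
    simp only [AddMonoidHom.mem_ker]
    show ((x ^ q - x) : K) ^ q ^ 2 + (x ^ q - x) ^ q + (x ^ q - x) = 0
    rw [hs2, hs1]
    have e1 : (x ^ q) ^ q ^ 2 = x ^ q ^ 3 := by
      rw [← pow_mul]; ring_nf
    have e2 : (x ^ q) ^ q = x ^ q ^ 2 := by rw [← pow_mul, sq]
    rw [e1, e2, hcube]
    ring
  -- cardinality of ker ψ is at most q
  have hkerψ : Nat.card ψ.ker ≤ q := by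
    have hdeg : (X ^ q - X : K[X]).natDegree = q := by
      have hlt : (X : K[X]).natDegree < (X ^ q : K[X]).natDegree := by
        rw [natDegree_X, natDegree_X_pow]; omega
      rw [natDegree_sub_eq_left_of_natDegree_lt hlt, natDegree_X_pow]
    have hPne : (X ^ q - X : K[X]) ≠ 0 := by
      intro h; rw [h, natDegree_zero] at hdeg; omega
    calc Nat.card ψ.ker = Nat.card {x : K // (X ^ q - X : K[X]).IsRoot x} := by
          refine Nat.card_congr (Equiv.subtypeEquivRight fun x => ?_)
          simp only [AddMonoidHom.mem_ker, IsRoot.def, eval_sub, eval_pow, eval_X]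
          exact Iff.rfl
      _ ≤ (X ^ q - X : K[X]).natDegree := KT_card_root_le _ hPne
      _ = q := hdeg
  -- cardinality of ker τ is at most q^2
  have hkerτ : Nat.card τ.ker ≤ q ^ 2 := by
    have hdeg : (X ^ q ^ 2 + X ^ q + X : K[X]).natDegree = q ^ 2 := by
      have h1 : (X ^ q ^ 2 + X ^ q : K[X]).natDegree = q ^ 2 := by
        have hlt : (X ^ q : K[X]).natDegree < (X ^ q ^ 2 : K[X]).natDegree := by
          rw [natDegree_X_pow, natDegree_X_pow]
          nlinarith
        rw [natDegree_add_eq_left_of_natDegree_lt hlt, natDegree_X_pow]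
      have hlt2 : (X : K[X]).natDegree < (X ^ q ^ 2 + X ^ q : K[X]).natDegree := by
        rw [natDegree_X, h1]
        nlinarith
      rw [natDegree_add_eq_left_of_natDegree_lt hlt2, h1]
    have hPne : (X ^ q ^ 2 + X ^ q + X : K[X]) ≠ 0 := by
      intro h; rw [h, natDegree_zero] at hdeg
      have : 1 < q ^ 2 := by nlinarith
      omega
    calc Nat.card τ.ker = Nat.card {x : K // (X ^ q ^ 2 + X ^ q + X : K[X]).IsRoot x} := by
          refine Nat.card_congr (Equiv.subtypeEquivRight fun x => ?_)
          simp only [AddMonoidHom.mem_ker, IsRoot.def, eval_add, eval_pow, eval_X]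
          exact Iff.rfl
      _ ≤ (X ^ q ^ 2 + X ^ q + X : K[X]).natDegree := KT_card_root_le _ hPne
      _ = q ^ 2 := hdeg
  -- first isomorphism theorem
  have hiso : Nat.card K = Nat.card ψ.range * Nat.card ψ.ker := by
    rw [AddSubgroup.card_eq_card_quotient_mul_card_addSubgroup ψ.ker]
    congr 1
    exact Nat.card_congr (QuotientAddGroup.quotientKerEquivRange ψ).toEquiv
  have hKcard : Nat.card K = q ^ 3 := by rw [Nat.card_eq_fintype_card, hK]
  have hrange : Nat.card ψ.range ≤ q ^ 2 :=
    le_trans (AddSubgroup.card_le_of_le hsub) hkerτ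
  have hker_ge : q ≤ Nat.card ψ.ker := by
    have h1 : q ^ 2 * q ≤ q ^ 2 * Nat.card ψ.ker := by
      calc q ^ 2 * q = q ^ 3 := by ring
        _ = Nat.card ψ.range * Nat.card ψ.ker := by rw [← hKcard, hiso]
        _ ≤ q ^ 2 * Nat.card ψ.ker := Nat.mul_le_mul_right _ hrange
    exact Nat.le_of_mul_le_mul_left h1 (by positivity)
  have hkerq : Nat.card ψ.ker = q := le_antisymm hkerψ hker_ge
  have hEq : Nat.card {x : K // x ^ q = x} = Nat.card ψ.ker := by
    refine Nat.card_congr (Equiv.subtypeEquivRight fun x => ?_)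
    simp only [AddMonoidHom.mem_ker]
    show x ^ q = x ↔ x ^ q - x = 0
    exact sub_eq_zero.symm
  rw [hEq, hkerq]

/-- Lemma 2.2(ii) of Katz–Tiep, "Rigid local systems and finite general linear groups":
for `p` an odd prime, `q0 = p^e > 1`, and `K0` the field with `q0^3` elements, letting
`N u` be the number of solutions `T ∈ K0` of `T^(q0^2) - T^(q0) = u * T`, we have
`N u = q0` for exactly `q0^2 + q0 + 1` values of `u ∈ K0`, and `N u = 1` for the remaining
`q0^3 - q0^2 - q0 - 1` values of `u ∈ K0`. -/
theorem stmt_1 (p e q0 : ℕ) (hp : p.Prime) (hodd : Odd p) (he : 1 ≤ e) (hq0 : q0 = p ^ e)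
    (K0 : Type*) [Field K0] [Fintype K0] (hK0 : Fintype.card K0 = q0 ^ 3)
    (N : K0 → ℕ)
    (hN : ∀ u : K0, N u = Nat.card {T : K0 // T ^ (q0 ^ 2) - T ^ q0 = u * T}) :
    Nat.card {u : K0 // N u = q0} = q0 ^ 2 + q0 + 1 ∧
    Nat.card {u : K0 // N u = 1} = q0 ^ 3 - q0 ^ 2 - q0 - 1 := by
  classical
  haveI := Fact.mk hp
  have hp3 : 3 ≤ p := by
    have h2 := hp.two_le
    have hne : p ≠ 2 := by rintro rfl; exact absurd hodd (by decide)
    omega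
  have hq1 : 2 ≤ q0 := by
    rw [hq0]
    calc 2 ≤ p := by omega
      _ = p ^ 1 := (pow_one p).symm
      _ ≤ p ^ e := Nat.pow_le_pow_right (by omega) he
  -- characteristic of K0 is p
  have hcard3 : Fintype.card K0 = p ^ (3 * e) := by
    rw [hK0, hq0, ← pow_mul, mul_comm]
  haveI hchar : CharP K0 p := by
    have h0 : ((p ^ (3 * e) : ℕ) : K0) = 0 := by
      rw [← hcard3]; exact FiniteField.cast_card_eq_zero K0
    have hdvd : ringChar K0 ∣ p ^ (3 * e) := (ringChar.spec K0 _).mp h0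
    have hrp : (ringChar K0).Prime := CharP.char_is_prime K0 (ringChar K0)
    have : ringChar K0 = p :=
      ((Nat.prime_dvd_prime_iff_eq hrp hp).mp (hrp.dvd_of_dvd_pow hdvd))
    rw [← this]; exact ringChar.charP K0
  -- the fixed field has q0 elements
  have hF : Nat.card {x : K0 // x ^ q0 = x} = q0 := by
    rw [hq0]
    exact KT_card_fixed p e (Fact.mk hp) he (by rw [hK0, hq0])
  -- basic identities
  have hcube : ∀ a : K0, a ^ q0 ^ 3 = a := by
    intro a; rw [← hK0]; exact FiniteField.pow_card a
  have hfrob : ∀ a b : K0, (a + b) ^ q0 = a ^ q0 + b ^ q0 := by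
    intro a b
    have := add_pow_char_pow (R := K0) (p := p) (n := e) (x := a) (y := b)
    rwa [← hq0] at this
  have hqne : q0 ≠ 0 := by omega
  have hq2ne : q0 ^ 2 ≠ 0 := pow_ne_zero 2 hqne
  have h2ne : (2 : K0) ≠ 0 := by
    intro h
    rw [show (2 : K0) = ((2 : ℕ) : K0) by push_cast; ring] at h
    rw [CharP.cast_eq_zero_iff K0 p 2] at h
    have := Nat.le_of_dvd (by norm_num) h
    omega
  -- the key linear relation satisfied by any solution
  have hstar : ∀ u T : K0, T ^ q0 ^ 2 - T ^ q0 = u * T →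
      (1 - u) * T = (1 + u ^ q0) * T ^ q0 := by
    intro u T hT
    have h1 : T ^ q0 ^ 2 = u * T + T ^ q0 := sub_eq_iff_eq_add.mp hT
    have h2 : (T ^ q0 ^ 2) ^ q0 = (u * T) ^ q0 + (T ^ q0) ^ q0 := by
      rw [h1, hfrob]
    have e1 : (T ^ q0 ^ 2) ^ q0 = T := by
      rw [← pow_mul, show q0 ^ 2 * q0 = q0 ^ 3 by ring]; exact hcube T
    have e2 : (T ^ q0) ^ q0 = T ^ q0 ^ 2 := by
      rw [← pow_mul, ← pow_two]
    have e3 : (u * T) ^ q0 = u ^ q0 * T ^ q0 := mul_pow u T q0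
    rw [e1, e2, e3] at h2
    -- h2 : T = u^q0 * T^q0 + T^(q0^2), h1 : T^(q0^2) = u*T + T^q0
    linear_combination h2 + h1
  -- dichotomy : each N u is 1 or q0
  have hdich : ∀ u : K0, N u = 1 ∨ N u = q0 := by
    intro u
    by_cases hex : ∃ T0 : K0, T0 ≠ 0 ∧ T0 ^ q0 ^ 2 - T0 ^ q0 = u * T0
    · right
      obtain ⟨T0, hT0ne, hT0⟩ := hex
      have hu1 : u ≠ 1 := by
        rintro rfl
        have hs := hstar 1 T0 hT0
        rw [sub_self, zero_mul, one_pow] at hs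
        have h11 : (1 + 1 : K0) = 2 := by norm_num
        rw [h11] at hs
        have hT0q : T0 ^ q0 = 0 :=
          (mul_eq_zero.mp hs.symm).resolve_left h2ne
        exact hT0ne (pow_eq_zero_iff (by omega : q0 ≠ 0) |>.mp hT0q)
      have h1u : (1 - u : K0) ≠ 0 := sub_ne_zero.mpr (Ne.symm hu1)
      have hcross : ∀ T : K0, T ^ q0 ^ 2 - T ^ q0 = u * T →
          T * T0 ^ q0 = T0 * T ^ q0 := by
        intro T hT
        have hA := hstar u T hT
        have hB := hstar u T0 hT0
        have key : (1 - u) * (T * T0 ^ q0) = (1 - u) * (T0 * T ^ q0) := by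
          calc (1 - u) * (T * T0 ^ q0) = ((1 - u) * T) * T0 ^ q0 := by ring
            _ = ((1 + u ^ q0) * T ^ q0) * T0 ^ q0 := by rw [hA]
            _ = ((1 + u ^ q0) * T0 ^ q0) * T ^ q0 := by ring
            _ = ((1 - u) * T0) * T ^ q0 := by rw [hB]
            _ = (1 - u) * (T0 * T ^ q0) := by ring
        exact mul_left_cancel₀ h1u key
      have hmem : ∀ lam : K0, lam ^ q0 = lam →
          (lam * T0) ^ q0 ^ 2 - (lam * T0) ^ q0 = u * (lam * T0) := by
        intro lam hlam
        have hl2 : lam ^ q0 ^ 2 = lam := by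
          rw [pow_two, pow_mul, hlam, hlam]
        rw [mul_pow, mul_pow, hl2, hlam]
        calc lam * T0 ^ q0 ^ 2 - lam * T0 ^ q0 = lam * (T0 ^ q0 ^ 2 - T0 ^ q0) := by ring
          _ = lam * (u * T0) := by rw [hT0]
          _ = u * (lam * T0) := by ring
      have hT0q : T0 ^ q0 ≠ 0 := pow_ne_zero _ hT0ne
      have eqv : {lam : K0 // lam ^ q0 = lam} ≃
          {T : K0 // T ^ q0 ^ 2 - T ^ q0 = u * T} :=
        { toFun := fun lam => ⟨lam.1 * T0, hmem lam.1 lam.2⟩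
          invFun := fun T => ⟨T.1 * T0⁻¹, by
            have hc := hcross T.1 T.2
            rw [mul_pow, inv_pow]
            field_simp
            linear_combination -hc⟩
          left_inv := fun lam => Subtype.ext (by field_simp)
          right_inv := fun T => Subtype.ext (by field_simp) }
      rw [hN u, ← Nat.card_congr eqv, hF]
    · left
      push_neg at hex
      rw [hN u, Nat.card_eq_one_iff_exists]
      have h0 : (0 : K0) ^ q0 ^ 2 - (0 : K0) ^ q0 = u * 0 := by
        rw [zero_pow hq2ne, zero_pow hqne]
        simp
      refine ⟨⟨0, h0⟩, ?_⟩
      rintro ⟨T, hT⟩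
      refine Subtype.ext ?_
      by_contra hne
      exact hex T hne hT
  -- the total count of solutions
  have hNfilt : ∀ u : K0, N u =
      (Finset.univ.filter fun T : K0 => T ^ q0 ^ 2 - T ^ q0 = u * T).card := by
    intro u; rw [hN u, Nat.card_eq_fintype_card, Fintype.card_subtype]
  have hq3pos : 1 ≤ q0 ^ 3 := Nat.one_le_pow 3 q0 (by omega)
  have hsum : ∑ u : K0, N u = 2 * q0 ^ 3 - 1 := by
    have hstep : ∑ u : K0, N u =
        ∑ T : K0, (Finset.univ.filter fun u : K0 => T ^ q0 ^ 2 - T ^ q0 = u * T).card := by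
      simp_rw [hNfilt, Finset.card_filter]
      exact Finset.sum_comm
    rw [hstep, Finset.sum_eq_sum_sdiff_singleton_add (Finset.mem_univ (0 : K0))]
    have hzero :
        (Finset.univ.filter fun u : K0 => (0:K0) ^ q0 ^ 2 - (0:K0) ^ q0 = u * 0).card
          = q0 ^ 3 := by
      rw [Finset.filter_true_of_mem, Finset.card_univ, hK0]
      intro u _
      rw [zero_pow hq2ne, zero_pow hqne]
      simp
    have hone : ∀ T ∈ Finset.univ \ {(0 : K0)},
        (Finset.univ.filter fun u : K0 => T ^ q0 ^ 2 - T ^ q0 = u * T).card = 1 := by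
      intro T hT
      have hTne : T ≠ 0 := by
        simp only [Finset.mem_sdiff, Finset.mem_univ, Finset.mem_singleton, true_and] at hT
        exact hT
      rw [Finset.card_eq_one]
      refine ⟨(T ^ q0 ^ 2 - T ^ q0) * T⁻¹, ?_⟩
      ext u
      simp only [Finset.mem_filter, Finset.mem_univ, true_and, Finset.mem_singleton]
      constructor
      · intro h; rw [h]; field_simp
      · rintro rfl; field_simp
    rw [Finset.sum_congr rfl hone, Finset.sum_const, smul_eq_mul, mul_one, hzero]
    have hcard0 : (Finset.univ \ {(0 : K0)}).card = q0 ^ 3 - 1 := by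
      rw [Finset.card_sdiff_of_subset (by simp), Finset.card_univ, hK0, Finset.card_singleton]
    rw [hcard0]
    omega
  -- final bookkeeping
  have hq0ne1 : q0 ≠ 1 := by omega
  set A : Finset K0 := Finset.univ.filter fun u : K0 => N u = q0 with hA
  have hAle : A.card ≤ q0 ^ 3 := by
    calc A.card ≤ Finset.univ.card := Finset.card_filter_le _ _
      _ = q0 ^ 3 := by rw [Finset.card_univ, hK0]
  have hsplit := Finset.sum_filter_add_sum_filter_not Finset.univ
    (fun u : K0 => N u = q0) N
  rw [← hA] at hsplit
  have hSA : ∑ u ∈ A, N u = q0 * A.card := by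
    rw [Finset.sum_congr rfl (fun u hu => (Finset.mem_filter.mp hu).2),
      Finset.sum_const, smul_eq_mul, mul_comm]
  have hBc : (Finset.univ.filter fun u : K0 => ¬ N u = q0).card = q0 ^ 3 - A.card := by
    have h := Finset.card_filter_add_card_filter_not
      (s := (Finset.univ : Finset K0)) (p := fun u : K0 => N u = q0)
    rw [Finset.card_univ, hK0, ← hA] at h
    omega
  have hSB : ∑ u ∈ Finset.univ.filter (fun u : K0 => ¬ N u = q0), N u
      = q0 ^ 3 - A.card := by
    rw [Finset.sum_congr rfl (fun u hu => ?_), Finset.sum_const, smul_eq_mul, mul_one, hBc]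
    have hu2 := (Finset.mem_filter.mp hu).2
    rcases hdich u with h | h
    · exact h
    · exact absurd h hu2
  have hmain : q0 * A.card + (q0 ^ 3 - A.card) = 2 * q0 ^ 3 - 1 := by
    rw [← hSA, ← hSB, hsplit, hsum]
  have hAcard : A.card = q0 ^ 2 + q0 + 1 := by
    have hfac : (q0 - 1) * (q0 ^ 2 + q0 + 1) + 1 = q0 ^ 3 := by
      obtain ⟨m, rfl⟩ : ∃ m, q0 = m + 2 := ⟨q0 - 2, by omega⟩
      have h1 : m + 2 - 1 = m + 1 := by omega
      rw [h1]; ring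
    have hqa : q0 * A.card = q0 ^ 3 - 1 + A.card := by
      generalize hX : q0 * A.card = X at hmain
      omega
    have h1 : (q0 - 1) * A.card = q0 ^ 3 - 1 := by
      rw [Nat.sub_mul, one_mul, hqa]
      omega
    have h2 : (q0 - 1) * (q0 ^ 2 + q0 + 1) = q0 ^ 3 - 1 := by omega
    have := h1.trans h2.symm
    exact Nat.eq_of_mul_eq_mul_left (by omega) this
  have hfilter1 : (Finset.univ.filter fun u : K0 => N u = 1)
      = Finset.univ.filter fun u : K0 => ¬ N u = q0 := by
    ext u
    simp only [Finset.mem_filter, Finset.mem_univ, true_and]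
    constructor
    · intro h hq; rw [h] at hq; exact hq0ne1 hq.symm
    · intro h
      rcases hdich u with h1 | h1
      · exact h1
      · exact absurd h1 h
  constructor
  · rw [Nat.card_eq_fintype_card, Fintype.card_subtype, ← hA, hAcard]
  · rw [Nat.card_eq_fintype_card, Fintype.card_subtype, hfilter1, hBc, hAcard]
    have h2 : 2 ≤ q0 := hq1
    generalize q0 ^ 3 = Q3 at *
    omega
end

section
/- Let n ≥ 2, q a prime power, W = F_q^n, and let Ω = W \ {0} be the set of the N = q^n − 1 nonzero vectors of W. Let ρ : GL(W) → Sym(Ω) be the (injective) homomorphism given by the natural action. Then the centralizer in the symmetric group Sym(Ω) of the subgroup ρ(SL(W)) equals ρ(Z(GL(W))), i.e. it consists exactly of the permutations of Ω given by v ↦ α·v for α ∈ F_q^×; in particular this centralizer is cyclic of order q − 1. -/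
open Matrix

/-- The permutation of the nonzero vectors of `Fin n → K` induced by an invertible matrix. -/
def glRhoFun {n : ℕ} {K : Type*} [Field K] (g : (Matrix (Fin n) (Fin n) K)ˣ)
    (v : {v : Fin n → K // v ≠ 0}) : {v : Fin n → K // v ≠ 0} :=
  ⟨(↑g : Matrix (Fin n) (Fin n) K).mulVec v.1, by
    intro h
    apply v.2
    have h2 := congrArg ((↑g⁻¹ : Matrix (Fin n) (Fin n) K).mulVec) h
    rwa [Matrix.mulVec_mulVec, Units.inv_mul, Matrix.one_mulVec, Matrix.mulVec_zero] at h2⟩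

lemma glRhoFun_comp {n : ℕ} {K : Type*} [Field K] (a b : (Matrix (Fin n) (Fin n) K)ˣ)
    (v : {v : Fin n → K // v ≠ 0}) : glRhoFun a (glRhoFun b v) = glRhoFun (a * b) v := by
  apply Subtype.ext
  simp [glRhoFun, Matrix.mulVec_mulVec, Units.val_mul]

lemma glRhoFun_inv_comp {n : ℕ} {K : Type*} [Field K] (g : (Matrix (Fin n) (Fin n) K)ˣ)
    (v : {v : Fin n → K // v ≠ 0}) : glRhoFun g⁻¹ (glRhoFun g v) = v := by
  rw [glRhoFun_comp, inv_mul_cancel]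
  apply Subtype.ext
  simp [glRhoFun]

/-- The natural permutation action of `GL_n(K)` on the set of nonzero vectors of `K^n`,
as a homomorphism to the symmetric group. -/
def glRho (n : ℕ) (K : Type*) [Field K] :
    (Matrix (Fin n) (Fin n) K)ˣ →* Equiv.Perm {v : Fin n → K // v ≠ 0} :=
  MonoidHom.mk' (fun g =>
    { toFun := glRhoFun g
      invFun := glRhoFun g⁻¹
      left_inv := fun v => glRhoFun_inv_comp g v
      right_inv := fun v => by
        have := glRhoFun_inv_comp g⁻¹ v
        rwa [inv_inv] at this })
    (fun a b => Equiv.ext fun v => (glRhoFun_comp a b v).symm)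

/-! A permutation `σ` of `Ω` commuting with `ρ(SL(W))` preserves every line: if `σ v` were
independent of `v`, a transvection fixing `v` and sending `σ v` to `σ v + v` would force
`σ v = σ v + v`. So `σ v = c_v • v`, and since `SL(W)` is transitive on `Ω` for `n ≥ 2`,
commuting with an element carrying `v₀` to `w` gives `c_w = c_{v₀}`. Hence the centralizer is
`ρ` of the scalars `Z(GL(W)) ≅ F_q^×`, on which `ρ` is injective. -/

open Module

section Transvections

variable {K V : Type*} [Field K] [AddCommGroup V] [Module K V]

theorem exists_dual_apply_ne_zero_apply_eq_zero {v w : V} (h : v ∉ K ∙ w) :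
    ∃ f : Dual K V, f v ≠ 0 ∧ f w = 0 := by
  obtain ⟨f, hfv, hf⟩ := (K ∙ w).exists_dual_map_eq_bot_of_notMem h inferInstance
  exact ⟨f, hfv, LinearMap.le_ker_iff_map.mpr hf (Submodule.mem_span_singleton_self w)⟩

theorem LinearIndependent.pair_iff_notMem_span_singleton {v w : V} (hv : v ≠ 0) :
    LinearIndependent K ![v, w] ↔ w ∉ K ∙ v := by
  simp [Submodule.mem_span_singleton, LinearIndependent.pair_iff' hv]

theorem LinearIndependent.notMem_span_singleton_of_pair {v w : V}
    (h : LinearIndependent K ![v, w]) : w ∉ K ∙ v :=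
  (LinearIndependent.pair_iff_notMem_span_singleton (h.ne_zero 0)).mp h

theorem LinearIndependent.exists_dual_apply_eq {v w : V} (h : LinearIndependent K ![v, w])
    (a b : K) : ∃ f : Dual K V, f v = a ∧ f w = b := by
  obtain ⟨f, hfv, hfw⟩ := exists_dual_apply_ne_zero_apply_eq_zero
    (LinearIndependent.pair_symm_iff.mp h).notMem_span_singleton_of_pair
  obtain ⟨g, hgw, hgv⟩ := exists_dual_apply_ne_zero_apply_eq_zero
    h.notMem_span_singleton_of_pair
  refine ⟨(a / f v) • f + (b / g w) • g, ?_, ?_⟩ <;> simp [*]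

variable [FiniteDimensional K V]

theorem LinearIndependent.exists_det_eq_one_apply_eq_add {v w : V}
    (h : LinearIndependent K ![v, w]) :
    ∃ t : V →ₗ[K] V, t.det = 1 ∧ t v = v ∧ t w = w + v := by
  obtain ⟨f, hfv, hfw⟩ := h.exists_dual_apply_eq 0 1
  exact ⟨LinearMap.transvection f v, by simp [hfv], by simp [LinearMap.transvection.apply, hfv],
    by simp [LinearMap.transvection.apply, hfw]⟩

theorem LinearIndependent.exists_det_eq_one_apply_eq {v w : V}
    (h : LinearIndependent K ![v, w]) :
    ∃ t : V →ₗ[K] V, t.det = 1 ∧ t v = w := by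
  obtain ⟨f, hfv, hfw⟩ := h.exists_dual_apply_eq 1 1
  exact ⟨LinearMap.transvection f (w - v), by simp [hfv, hfw],
    by simp [LinearMap.transvection.apply, hfv]⟩

theorem exists_det_eq_one_apply_eq (hV : 1 < finrank K V) {v w : V} (hv : v ≠ 0) (hw : w ≠ 0) :
    ∃ t : V →ₗ[K] V, t.det = 1 ∧ t v = w := by
  by_cases hvw : LinearIndependent K ![v, w]
  · exact hvw.exists_det_eq_one_apply_eq
  -- `w` is a multiple of `v`: pass through a vector `u` independent of both.
  obtain ⟨a, rfl⟩ : ∃ a : K, a • v = w := by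
    simpa [LinearIndependent.pair_iff' hv] using hvw
  have ha : IsUnit a := by rw [isUnit_iff_ne_zero]; rintro rfl; simp at hw
  obtain ⟨u, hvu⟩ := exists_linearIndependent_pair_of_one_lt_finrank hV hv
  have hua : LinearIndependent K ![u, a • v] := by
    rw [LinearIndependent.pair_symm_iff, LinearIndependent.pair_iff_notMem_span_singleton hw,
      Submodule.span_singleton_smul_eq ha]
    exact hvu.notMem_span_singleton_of_pair
  obtain ⟨t₁, ht₁, hvu⟩ := hvu.exists_det_eq_one_apply_eq
  obtain ⟨t₂, ht₂, hua⟩ := hua.exists_det_eq_one_apply_eq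
  exact ⟨t₂ * t₁, by simp [ht₁, ht₂], by simp [hvu, hua]⟩

end Transvections

section Centralizer

variable {n : ℕ} {K : Type*} [Field K]

def slImage (n : ℕ) (K : Type*) [Field K] : Set (Equiv.Perm {v : Fin n → K // v ≠ 0}) :=
  Set.range fun g : SpecialLinearGroup (Fin n) K => glRho n K (SpecialLinearGroup.toGL g)

theorem glRho_apply (g : (Matrix (Fin n) (Fin n) K)ˣ) (v : {v : Fin n → K // v ≠ 0}) :
    (glRho n K g v : Fin n → K) = (g : Matrix (Fin n) (Fin n) K) *ᵥ v :=
  rfl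

theorem glRho_scalar_apply (α : Kˣ) (v : {v : Fin n → K // v ≠ 0}) :
    (glRho n K (GeneralLinearGroup.scalar (Fin n) α) v : Fin n → K) =
      (α : K) • (v : Fin n → K) := by
  rw [glRho_apply, GeneralLinearGroup.coe_scalar, scalar_apply, ← smul_one_eq_diagonal,
    smul_mulVec, one_mulVec]

theorem glRho_comp_scalar_injective [NeZero n] :
    Function.Injective ((glRho n K).comp (GeneralLinearGroup.scalar (Fin n))) := by
  intro α β h
  have hv : (Pi.single 0 1 : Fin n → K) ≠ 0 := by simp
  have := congrArg (fun σ => (σ ⟨_, hv⟩ : Fin n → K) 0) h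
  simpa [glRho_scalar_apply, Units.ext_iff] using this

theorem exists_specialLinearGroup_mulVec_eq {ι R : Type*} [Fintype ι] [DecidableEq ι]
    [CommRing R] {t : (ι → R) →ₗ[R] ι → R} (ht : t.det = 1) :
    ∃ g : SpecialLinearGroup ι R, ∀ x, (g : Matrix ι ι R) *ᵥ x = t x :=
  ⟨⟨LinearMap.toMatrix' t, by rwa [LinearMap.det_toMatrix']⟩, LinearMap.toMatrix'_mulVec t⟩

variable {σ : Equiv.Perm {v : Fin n → K // v ≠ 0}}

theorem apply_eq_map_apply_of_mem_centralizer (hσ : σ ∈ Subgroup.centralizer (slImage n K))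
    {t : (Fin n → K) →ₗ[K] Fin n → K} (ht : t.det = 1) {v w : {v : Fin n → K // v ≠ 0}}
    (hvw : t v = w) : (σ w : Fin n → K) = t (σ v) := by
  obtain ⟨g, hg⟩ := exists_specialLinearGroup_mulVec_eq ht
  have hgv : glRho n K (SpecialLinearGroup.toGL g) v = w := Subtype.ext ((hg v).trans hvw)
  have hcomm := congrArg (fun τ : Equiv.Perm {v : Fin n → K // v ≠ 0} => (τ v : Fin n → K))
    (Subgroup.mem_centralizer_iff.mp hσ _ ⟨g, rfl⟩)
  simpa [glRho_apply, hgv, hg] using hcomm.symm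

theorem exists_smul_of_mem_centralizer (hσ : σ ∈ Subgroup.centralizer (slImage n K))
    (v : {v : Fin n → K // v ≠ 0}) :
    ∃ c : K, (σ v : Fin n → K) = c • (v : Fin n → K) := by
  by_contra! hc
  have hind : LinearIndependent K ![(v : Fin n → K), σ v] :=
    (LinearIndependent.pair_iff' v.2).mpr fun c hcv => hc c hcv.symm
  obtain ⟨t, ht, htv, htσv⟩ := hind.exists_det_eq_one_apply_eq_add
  have := apply_eq_map_apply_of_mem_centralizer hσ ht htv
  rw [htσv, left_eq_add] at this
  exact v.2 this

theorem exists_units_smul_of_mem_centralizer (hn : 2 ≤ n)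
    (hσ : σ ∈ Subgroup.centralizer (slImage n K)) :
    ∃ α : Kˣ, ∀ v, (σ v : Fin n → K) = (α : K) • (v : Fin n → K) := by
  have : NeZero n := ⟨by omega⟩
  let v₀ : {v : Fin n → K // v ≠ 0} := ⟨Pi.single 0 1, by simp⟩
  obtain ⟨c, hc⟩ := exists_smul_of_mem_centralizer hσ v₀
  have hc0 : c ≠ 0 := by rintro rfl; exact (σ v₀).2 (by simpa using hc)
  refine ⟨Units.mk0 c hc0, fun w => ?_⟩
  obtain ⟨t, ht, htw⟩ := exists_det_eq_one_apply_eq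
    (by rwa [finrank_fin_fun]) v₀.2 w.2
  rw [apply_eq_map_apply_of_mem_centralizer hσ ht htw, hc, map_smul, htw, Units.val_mk0]

theorem mem_centralizer_slImage_iff (hn : 2 ≤ n) :
    σ ∈ Subgroup.centralizer (slImage n K) ↔
      ∃ α : Kˣ, ∀ v, (σ v : Fin n → K) = (α : K) • (v : Fin n → K) := by
  refine ⟨exists_units_smul_of_mem_centralizer hn, fun ⟨α, hα⟩ => ?_⟩
  rw [Subgroup.mem_centralizer_iff]
  rintro - ⟨g, rfl⟩
  ext v : 2
  simp only [Equiv.Perm.mul_apply, glRho_apply, hα, mulVec_smul]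

theorem centralizer_slImage_eq_range (hn : 2 ≤ n) :
    Subgroup.centralizer (slImage n K) =
      ((glRho n K).comp (GeneralLinearGroup.scalar (Fin n))).range := by
  ext σ
  rw [mem_centralizer_slImage_iff hn, MonoidHom.mem_range]
  refine exists_congr fun α => ?_
  simp only [Equiv.ext_iff, Subtype.ext_iff, MonoidHom.comp_apply, glRho_scalar_apply, eq_comm]

end Centralizer

theorem stmt_6_general (q n : ℕ) (hn : 2 ≤ n)
    (K : Type*) [Field K] [Fintype K] (hK : Fintype.card K = q) :
    Subgroup.centralizer
        (Set.range fun g : Matrix.SpecialLinearGroup (Fin n) K =>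
          glRho n K (Matrix.SpecialLinearGroup.toGL g)) =
      Subgroup.map (glRho n K) (Subgroup.center (Matrix (Fin n) (Fin n) K)ˣ) ∧
    (∀ σ : Equiv.Perm {v : Fin n → K // v ≠ 0},
      σ ∈ Subgroup.centralizer
        (Set.range fun g : Matrix.SpecialLinearGroup (Fin n) K =>
          glRho n K (Matrix.SpecialLinearGroup.toGL g)) ↔
      ∃ α : Kˣ, ∀ v : {v : Fin n → K // v ≠ 0}, (σ v : Fin n → K) = (α : K) • (v : Fin n → K)) ∧
    IsCyclic (Subgroup.centralizer
        (Set.range fun g : Matrix.SpecialLinearGroup (Fin n) K =>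
          glRho n K (Matrix.SpecialLinearGroup.toGL g))) ∧
    Nat.card (Subgroup.centralizer
        (Set.range fun g : Matrix.SpecialLinearGroup (Fin n) K =>
          glRho n K (Matrix.SpecialLinearGroup.toGL g))) = q - 1 := by
  have : NeZero n := ⟨by omega⟩
  have hrange := centralizer_slImage_eq_range (K := K) hn
  have hinj := glRho_comp_scalar_injective (n := n) (K := K)
  refine ⟨?_, fun σ => mem_centralizer_slImage_iff hn, ?_, ?_⟩
  · rw [GeneralLinearGroup.center_eq_range_scalar, ← MonoidHom.range_comp]
    exact hrange
  · change IsCyclic (Subgroup.centralizer (slImage n K))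
    rw [hrange]
    exact isCyclic_of_surjective _ (MonoidHom.ofInjective hinj).surjective
  · change Nat.card (Subgroup.centralizer (slImage n K)) = q - 1
    rw [hrange, ← Nat.card_congr (MonoidHom.ofInjective hinj).toEquiv, Nat.card_units,
      Nat.card_eq_fintype_card, hK]

/-- Lemma 6.3 of Katz–Tiep, "Rigid local systems and finite general linear groups":
for `n ≥ 2`, `q` a prime power, `W = F_q^n` and `Ω = W \ {0}` (of size `N = q^n - 1`),
the centralizer in `Sym(Ω)` of the image `ρ(SL(W))` of the natural permutation action
`ρ : GL(W) → Sym(Ω)` is exactly `ρ(Z(GL(W)))`, the group of permutations `v ↦ α • v` for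
`α ∈ F_q^×`; in particular this centralizer is cyclic of order `q - 1`. -/
theorem stmt_6 (p k q n : ℕ) (hp : p.Prime) (hk : 0 < k) (hq : q = p ^ k) (hn : 2 ≤ n)
    (K : Type*) [Field K] [Fintype K] [DecidableEq K] (hK : Fintype.card K = q) :
    Subgroup.centralizer
        (Set.range fun g : Matrix.SpecialLinearGroup (Fin n) K =>
          glRho n K (Matrix.SpecialLinearGroup.toGL g)) =
      Subgroup.map (glRho n K) (Subgroup.center (Matrix (Fin n) (Fin n) K)ˣ) ∧
    (∀ σ : Equiv.Perm {v : Fin n → K // v ≠ 0},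
      σ ∈ Subgroup.centralizer
        (Set.range fun g : Matrix.SpecialLinearGroup (Fin n) K =>
          glRho n K (Matrix.SpecialLinearGroup.toGL g)) ↔
      ∃ α : Kˣ, ∀ v : {v : Fin n → K // v ≠ 0}, (σ v : Fin n → K) = (α : K) • (v : Fin n → K)) ∧
    IsCyclic (Subgroup.centralizer
        (Set.range fun g : Matrix.SpecialLinearGroup (Fin n) K =>
          glRho n K (Matrix.SpecialLinearGroup.toGL g))) ∧
    Nat.card (Subgroup.centralizer
        (Set.range fun g : Matrix.SpecialLinearGroup (Fin n) K =>
          glRho n K (Matrix.SpecialLinearGroup.toGL g))) = q - 1 :=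
  stmt_6_general q n hn K hK
end

section
/- Let r be a prime and m ≥ 2 an integer with (m, r) ≠ (2, 2). Then the affine general linear group AGL_m(r), i.e. the group of all invertible affine transformations x ↦ A·x + b (A ∈ GL_m(F_r), b ∈ F_r^m) of the space F_r^m, contains no element of order r^m. -/
/-!
An affine map `g = (x ↦ A x + b)` satisfies `g ^ n = (x ↦ A ^ n x + (∑_{i<n} A ^ i) b)`.
If `g` has `r`-power order, then `A ^ (r ^ k) = 1`, so `A - 1` is nilpotent and
`(A - 1) ^ m = 0` on `F_r ^ m`. In characteristic `r` we have `A ^ (r ^ n) - 1 = (A - 1) ^ (r ^ n)`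
and `∑_{i < r ^ n} A ^ i = (A - 1) ^ (r ^ n - 1)`, so both vanish as soon as `m < r ^ n`.
Since `m < r ^ (m - 1)` outside the case `(m, r) = (2, 2)`, every element of `r`-power order
has order dividing `r ^ (m - 1)`.
-/

open Finset Module Polynomial

theorem Nat.lt_pow_sub_one_of_ne_two {r m : ℕ} (hr : 2 ≤ r) (hm : 2 ≤ m)
    (hmr : ¬(m = 2 ∧ r = 2)) : m < r ^ (m - 1) := by
  obtain rfl | hm3 := hm.eq_or_lt
  · simpa using lt_of_le_of_ne hr (by omega)
  · obtain ⟨k, rfl⟩ : ∃ k, m = k + 3 := ⟨m - 3, by omega⟩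
    calc k + 3 < 2 ^ (k + 2) := by
          have := Nat.lt_two_pow_self (n := k)
          rw [pow_add]; omega
      _ ≤ r ^ (k + 3 - 1) := Nat.pow_le_pow_left hr _

section CharP

variable (p : ℕ) [Fact p.Prime]

theorem Polynomial.X_sub_one_pow_char_pow {R : Type*} [CommRing R] [CharP R p] (n : ℕ) :
    (X - 1 : R[X]) ^ p ^ n = X ^ p ^ n - 1 := by
  simpa using sub_pow_char_pow (X : R[X]) 1 (p := p) (n := n)

theorem Polynomial.geom_sum_X_char_pow {R : Type*} [CommRing R] [Nontrivial R] [CharP R p]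
    (n : ℕ) : ∑ i ∈ range (p ^ n), (X : R[X]) ^ i = (X - 1) ^ (p ^ n - 1) := by
  refine (monic_X_sub_C (1 : R)).isRegular.right ?_
  simp only [C_1]
  rw [geom_sum_mul, ← pow_succ, Nat.sub_add_cancel (pow_pos (Fact.out : p.Prime).pos n),
    X_sub_one_pow_char_pow]

theorem sub_one_pow_char_pow (R : Type*) {A : Type*} [CommRing R] [CharP R p] [Ring A]
    [Algebra R A] (a : A) (n : ℕ) : (a - 1) ^ p ^ n = a ^ p ^ n - 1 := by
  simpa using congrArg (aeval a) (X_sub_one_pow_char_pow (R := R) p n)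

theorem geom_sum_char_pow (R : Type*) {A : Type*} [CommRing R] [Nontrivial R] [CharP R p]
    [Ring A] [Algebra R A] (a : A) (n : ℕ) :
    ∑ i ∈ range (p ^ n), a ^ i = (a - 1) ^ (p ^ n - 1) := by
  simpa using congrArg (aeval a) (geom_sum_X_char_pow (R := R) p n)

end CharP

theorem IsNilpotent.pow_finrank_eq_zero {R M : Type*} [CommRing R] [IsDomain R]
    [AddCommGroup M] [Module R M] [Module.Finite R M] [Module.Free R M] {f : Module.End R M}
    (hf : IsNilpotent f) : f ^ finrank R M = 0 := by
  simpa [hf.charpoly_eq_X_pow_finrank] using f.aeval_self_charpoly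

namespace AffineEquiv

section Ring

variable {k V : Type*} [Ring k] [AddCommGroup V] [Module k V]

theorem pow_apply (g : V ≃ᵃ[k] V) (n : ℕ) (x : V) :
    (g ^ n) x = ((g.linear : Module.End k V) ^ n) x
      + (∑ i ∈ range n, (g.linear : Module.End k V) ^ i) (g 0) := by
  induction n generalizing x with
  | zero => simp
  | succ n ih =>
    have hg : ∀ y, g y = g.linear y + g 0 := fun y => by simpa using g.map_vadd 0 y
    rw [pow_succ', coe_mul, Function.comp_apply, ih, hg, sum_range_succ', pow_succ', pow_zero]
    simp only [map_add, map_sum, LinearMap.add_apply, LinearMap.sum_apply, Module.End.mul_apply,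
      pow_succ', Module.End.one_apply, LinearEquiv.coe_coe]
    abel

theorem linear_pow (g : V ≃ᵃ[k] V) (n : ℕ) :
    ((g ^ n).linear : Module.End k V) = (g.linear : Module.End k V) ^ n :=
  map_pow (LinearEquiv.automorphismGroup.toLinearMapMonoidHom.comp linearHom) g n

end Ring

theorem pow_char_pow_eq_one_of_finrank_lt {K V : Type*} [Field K] [AddCommGroup V]
    [Module K V] [FiniteDimensional K V] (p : ℕ) [Fact p.Prime] [CharP K p] {g : V ≃ᵃ[K] V}
    {k n : ℕ} (hg : g ^ p ^ k = 1) (hn : finrank K V < p ^ n) : g ^ p ^ n = 1 := by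
  set A : Module.End K V := ↑g.linear
  have hA : A ^ p ^ k = 1 := by
    rw [← linear_pow, hg]
    rfl
  have hzero : ∀ j, finrank K V ≤ j → (A - 1) ^ j = 0 := by
    have hnil : IsNilpotent (A - 1) := ⟨p ^ k, by rw [sub_one_pow_char_pow p K, hA, sub_self]⟩
    intro j hj
    rw [← Nat.sub_add_cancel hj, pow_add, hnil.pow_finrank_eq_zero, mul_zero]
  have hAn : A ^ p ^ n = 1 := by
    rw [← sub_eq_zero, ← sub_one_pow_char_pow p K]
    exact hzero _ hn.le
  have hsum : ∑ i ∈ range (p ^ n), A ^ i = 0 := by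
    rw [geom_sum_char_pow p K]
    exact hzero _ (by omega)
  ext x
  rw [pow_apply, hAn, hsum]
  simp

end AffineEquiv

/-- Lemma 6.6 of Katz–Tiep, "Rigid local systems and finite general linear groups":
for a prime `r` and `m ≥ 2` with `(m, r) ≠ (2, 2)`, the affine general linear group
`AGL_m(r)` (the group of invertible affine transformations of `F_r^m`, i.e. affine
self-equivalences of the `F_r`-vector space `F_r^m`) has no element of order `r^m`. -/
theorem stmt_9 (r m : ℕ) (hr : r.Prime) (hm : 2 ≤ m) (hmr : ¬(m = 2 ∧ r = 2)) :
    ∀ g : (Fin m → ZMod r) ≃ᵃ[ZMod r] (Fin m → ZMod r), orderOf g ≠ r ^ m := by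
  intro g hord
  have := Fact.mk hr
  have hg : g ^ r ^ m = 1 := hord ▸ pow_orderOf_eq_one g
  have hdim : finrank (ZMod r) (Fin m → ZMod r) < r ^ (m - 1) := by
    simpa using Nat.lt_pow_sub_one_of_ne_two hr.two_le hm hmr
  have hdvd : r ^ m ∣ r ^ (m - 1) :=
    hord ▸ orderOf_dvd_of_pow_eq_one (g.pow_char_pow_eq_one_of_finrank_lt r hg hdim)
  rw [Nat.pow_dvd_pow_iff_le_right hr.one_lt] at hdvd
  omega
end
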